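/- arXiv:2004.12177 — 6 statements merged into one kernel-verified Lean document; each statement's English description precedes it below -/
import Mathlib

section
/- Let f and g be nonzero multivariate polynomials in n variables over ℂ. Then the convex hull in ℝⁿ of the support of the product f·g equals the Minkowski sum of the convex hull of the support of f and the convex hull of the support of g. -/
open Pointwise

noncomputable def expMap (n : ℕ) : (Fin n →₀ ℕ) →+ (Fin n → ℝ) where
  toFun α i := (α i : ℝ)
  map_zero' := by funext i; simp
  map_add' a b := by funext i; simp

open MvPolynomial in
noncomputable def facePart {n : ℕ} (f : MvPolynomial (Fin n) ℂ)
    (p : (Fin n →₀ ℕ) → Prop) [DecidablePred p] : MvPolynomial (Fin n) ℂ :=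
  ∑ a ∈ f.support.filter p, monomial a (coeff a f)

open MvPolynomial in
lemma coeff_facePart {n : ℕ} (f : MvPolynomial (Fin n) ℂ)
    (p : (Fin n →₀ ℕ) → Prop) [DecidablePred p] (b : Fin n →₀ ℕ) :
    coeff b (facePart f p) = if p b then coeff b f else 0 := by
  classical
  unfold facePart
  rw [MvPolynomial.coeff_sum]
  simp only [coeff_monomial]
  rw [Finset.sum_ite_eq' (f.support.filter p) b (fun a => coeff a f)]
  by_cases hb : p b
  · by_cases hs : b ∈ f.support
    · simp [Finset.mem_filter, hb, hs]
    · simp only [Finset.mem_filter, hb, and_true, hs, if_false, if_true]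
      simpa [MvPolynomial.mem_support_iff, not_not, eq_comm] using hs
  · simp [Finset.mem_filter, hb]

open MvPolynomial in
lemma support_facePart {n : ℕ} (f : MvPolynomial (Fin n) ℂ)
    (p : (Fin n →₀ ℕ) → Prop) [DecidablePred p] :
    (facePart f p).support = f.support.filter p := by
  ext b
  simp only [mem_support_iff, coeff_facePart, Finset.mem_filter, mem_support_iff]
  by_cases hb : p b <;> simp [hb]

open MvPolynomial in
lemma exists_max_support {n : ℕ} (f g : MvPolynomial (Fin n) ℂ)
    (hf : f.support.Nonempty) (hg : g.support.Nonempty) (ℓ : (Fin n → ℝ) →ₗ[ℝ] ℝ) :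
    ∃ v ∈ (f * g).support,
      ℓ (expMap n v) = f.support.sup' hf (fun a => ℓ (expMap n a)) +
        g.support.sup' hg (fun a => ℓ (expMap n a)) := by
  classical
  set Mf := f.support.sup' hf (fun a => ℓ (expMap n a)) with hMf
  set Mg := g.support.sup' hg (fun a => ℓ (expMap n a)) with hMg
  set f' := facePart f (fun a => ℓ (expMap n a) = Mf) with hf'
  set g' := facePart g (fun a => ℓ (expMap n a) = Mg) with hg'
  have hsf : f'.support = f.support.filter (fun a => ℓ (expMap n a) = Mf) :=
    support_facePart _ _
  have hsg : g'.support = g.support.filter (fun a => ℓ (expMap n a) = Mg) :=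
    support_facePart _ _
  have hf'0 : f' ≠ 0 := by
    obtain ⟨a₀, ha₀, ha₀'⟩ := Finset.exists_mem_eq_sup' hf (fun a => ℓ (expMap n a))
    exact MvPolynomial.support_nonempty.1 ⟨a₀, by rw [hsf]; exact Finset.mem_filter.2 ⟨ha₀, ha₀'.symm⟩⟩
  have hg'0 : g' ≠ 0 := by
    obtain ⟨a₀, ha₀, ha₀'⟩ := Finset.exists_mem_eq_sup' hg (fun a => ℓ (expMap n a))
    exact MvPolynomial.support_nonempty.1 ⟨a₀, by rw [hsg]; exact Finset.mem_filter.2 ⟨ha₀, ha₀'.symm⟩⟩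
  have hmul : f' * g' ≠ 0 := mul_ne_zero hf'0 hg'0
  obtain ⟨v, hv⟩ : (f' * g').support.Nonempty := MvPolynomial.support_nonempty.2 hmul
  obtain ⟨a, ha, b, hb, rfl⟩ := Finset.mem_add.1 (MvPolynomial.support_mul f' g' hv)
  rw [hsf, Finset.mem_filter] at ha
  rw [hsg, Finset.mem_filter] at hb
  have hval : ℓ (expMap n (a + b)) = Mf + Mg := by
    rw [map_add, map_add, ha.2, hb.2]
  refine ⟨a + b, ?_, hval⟩
  rw [mem_support_iff]
  have hco : coeff (a + b) (f * g) = coeff (a + b) (f' * g') := by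
    rw [coeff_mul, coeff_mul]
    refine Finset.sum_congr rfl fun x hx => ?_
    have hxv : x.1 + x.2 = a + b := Finset.HasAntidiagonal.mem_antidiagonal.1 hx
    rw [hf', hg', coeff_facePart, coeff_facePart]
    have hsum : ℓ (expMap n x.1) + ℓ (expMap n x.2) = Mf + Mg := by
      rw [← map_add, ← map_add, hxv, hval]
    by_cases h1 : ℓ (expMap n x.1) = Mf
    · by_cases h2 : ℓ (expMap n x.2) = Mg
      · simp [h1, h2]
      · simp only [h2, if_false, mul_zero]
        rcases eq_or_ne (coeff x.2 g) 0 with h | h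
        · simp [h]
        rcases eq_or_ne (coeff x.1 f) 0 with h' | h'
        · simp [h']
        exfalso
        have hx2 : x.2 ∈ g.support := mem_support_iff.2 h
        have hle2 : ℓ (expMap n x.2) ≤ Mg := Finset.le_sup' (fun a => ℓ (expMap n a)) hx2
        have h2lt : ℓ (expMap n x.2) < Mg := lt_of_le_of_ne hle2 h2
        have hx1 : x.1 ∈ f.support := mem_support_iff.2 h'
        have : ℓ (expMap n x.1) ≤ Mf := Finset.le_sup' (fun a => ℓ (expMap n a)) hx1
        linarith
    · simp only [h1, if_false, zero_mul]
      rcases eq_or_ne (coeff x.1 f) 0 with h | h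
      · simp [h]
      · have hx1 : x.1 ∈ f.support := mem_support_iff.2 h
        have hle1 : ℓ (expMap n x.1) ≤ Mf := Finset.le_sup' (fun a => ℓ (expMap n a)) hx1
        have h1lt : ℓ (expMap n x.1) < Mf := lt_of_le_of_ne hle1 h1
        have h2gt : ℓ (expMap n x.2) > Mg := by linarith
        rcases eq_or_ne (coeff x.2 g) 0 with h' | h'
        · simp [h']
        · have hx2 : x.2 ∈ g.support := mem_support_iff.2 h'
          have : ℓ (expMap n x.2) ≤ Mg := Finset.le_sup' (fun a => ℓ (expMap n a)) hx2
          linarith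
  rw [hco]
  exact mem_support_iff.1 hv

/-- The Newton polytope of a product of nonzero multivariate polynomials over `ℂ`
is the Minkowski sum of the Newton polytopes of the factors. -/
theorem newton_polytope_mul (n : ℕ) (f g : MvPolynomial (Fin n) ℂ)
    (hf : f ≠ 0) (hg : g ≠ 0) :
    convexHull ℝ
        ((fun (α : Fin n →₀ ℕ) (i : Fin n) => (α i : ℝ)) ''
          ((f * g).support : Set (Fin n →₀ ℕ))) =
      convexHull ℝ
          ((fun (α : Fin n →₀ ℕ) (i : Fin n) => (α i : ℝ)) ''
            (f.support : Set (Fin n →₀ ℕ))) +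
        convexHull ℝ
          ((fun (α : Fin n →₀ ℕ) (i : Fin n) => (α i : ℝ)) ''
            (g.support : Set (Fin n →₀ ℕ))) := by
  classical
  have heq : (fun (α : Fin n →₀ ℕ) (i : Fin n) => (α i : ℝ)) = ⇑(expMap n) := rfl
  rw [heq]
  have hfne : f.support.Nonempty := MvPolynomial.support_nonempty.2 hf
  have hgne : g.support.Nonempty := MvPolynomial.support_nonempty.2 hg
  apply Set.Subset.antisymm
  · -- easy direction
    have h1 : (⇑(expMap n) '' ((f * g).support : Set (Fin n →₀ ℕ))) ⊆
        (⇑(expMap n) '' (f.support : Set (Fin n →₀ ℕ))) +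
          (⇑(expMap n) '' (g.support : Set (Fin n →₀ ℕ))) := by
      rintro _ ⟨v, hv, rfl⟩
      obtain ⟨a, ha, b, hb, rfl⟩ := Finset.mem_add.1 (MvPolynomial.support_mul f g hv)
      exact ⟨expMap n a, Set.mem_image_of_mem _ ha, expMap n b,
        Set.mem_image_of_mem _ hb, (map_add _ _ _).symm⟩
    calc convexHull ℝ (⇑(expMap n) '' ((f * g).support : Set (Fin n →₀ ℕ)))
        ⊆ convexHull ℝ ((⇑(expMap n) '' (f.support : Set (Fin n →₀ ℕ))) +
            (⇑(expMap n) '' (g.support : Set (Fin n →₀ ℕ)))) := convexHull_mono h1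
      _ = _ := convexHull_add _ _
  · rintro x hx
    rw [Set.mem_add] at hx
    obtain ⟨a, ha, b, hb, rfl⟩ := hx
    by_contra hnot
    have hfin : (⇑(expMap n) '' ((f * g).support : Set (Fin n →₀ ℕ))).Finite :=
      (Set.Finite.image _ (Finset.finite_toSet _))
    obtain ⟨ℓc, u, hlt, hgt⟩ := geometric_hahn_banach_closed_point
      (convex_convexHull ℝ _) (hfin.isClosed_convexHull ℝ) hnot
    set ℓ : (Fin n → ℝ) →ₗ[ℝ] ℝ := ℓc.toLinearMap with hℓ
    set Mf := f.support.sup' hfne (fun a => ℓ (expMap n a)) with hMf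
    set Mg := g.support.sup' hgne (fun a => ℓ (expMap n a)) with hMg
    have hha : ℓ a ≤ Mf := by
      have : convexHull ℝ (⇑(expMap n) '' (f.support : Set (Fin n →₀ ℕ))) ⊆ {w | ℓ w ≤ Mf} := by
        apply convexHull_min ?_ (convex_halfSpace_le (LinearMap.isLinear ℓ) Mf)
        rintro _ ⟨v, hv, rfl⟩
        exact Finset.le_sup' (fun a => ℓ (expMap n a)) hv
      exact this ha
    have hhb : ℓ b ≤ Mg := by
      have : convexHull ℝ (⇑(expMap n) '' (g.support : Set (Fin n →₀ ℕ))) ⊆ {w | ℓ w ≤ Mg} := by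
        apply convexHull_min ?_ (convex_halfSpace_le (LinearMap.isLinear ℓ) Mg)
        rintro _ ⟨v, hv, rfl⟩
        exact Finset.le_sup' (fun a => ℓ (expMap n a)) hv
      exact this hb
    obtain ⟨v, hv, hval⟩ := exists_max_support f g hfne hgne ℓ
    have hvin : expMap n v ∈ convexHull ℝ (⇑(expMap n) '' ((f * g).support : Set (Fin n →₀ ℕ))) :=
      subset_convexHull ℝ _ (Set.mem_image_of_mem _ hv)
    have h1 : ℓ (expMap n v) < u := hlt _ hvin
    have h2 : u < ℓ (a + b) := hgt
    have h3 : ℓ (a + b) = ℓ a + ℓ b := map_add ℓ a b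
    linarith [hval ▸ h1]
end

section
/- Let n ≥ 1, let f be a nonzero polynomial in ℂ[x₁,…,xₙ], and let ω ∈ ℤⁿ. Then there exists an integer h such that ⟨α, ω⟩ = h for every exponent vector α in the support of f if and only if for every t ∈ ℂ with t ≠ 0, the polynomial f(t^{ω₁}x₁, …, t^{ωₙ}xₙ) has the same zero set in ℂⁿ as f. -/
open MvPolynomial

private lemma prod_zpow_sum' {ι : Type*} (t : ℂ) (ht : t ≠ 0) (s : Finset ι) (e : ι → ℤ) :
    ∏ i ∈ s, t ^ e i = t ^ (∑ i ∈ s, e i) := by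
  induction s using Finset.cons_induction with
  | empty => simp
  | cons a s ha ih => rw [Finset.prod_cons, Finset.sum_cons, ih, zpow_add₀ ht]

private lemma eval_torus (n : ℕ) (f : MvPolynomial (Fin n) ℂ) (t : ℂ) (ht : t ≠ 0)
    (ω : Fin n → ℤ) (a : Fin n → ℂ) :
    eval a ((aeval fun i => C (t ^ ω i) * X i) f) =
      ∑ α ∈ f.support, coeff α f * t ^ (∑ i, (α i : ℤ) * ω i) * ∏ i, a i ^ α i := by
  have key : eval a ((aeval fun i => C (t ^ ω i) * X i) f)
      = eval (fun i => t ^ ω i * a i) f := by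
    rw [aeval_def, eval₂_comp_left]
    have : (eval a).comp (algebraMap ℂ (MvPolynomial (Fin n) ℂ)) = RingHom.id ℂ := by
      ext c; simp [algebraMap_eq]
    rw [this]
    simp [eval₂_id, Function.comp_def]
  rw [key, eval_eq']
  refine Finset.sum_congr rfl fun α _ => ?_
  have : ∏ i, (t ^ ω i * a i) ^ α i
      = (∏ i, (t ^ ω i) ^ α i) * ∏ i, a i ^ α i := by
    rw [← Finset.prod_mul_distrib]
    exact Finset.prod_congr rfl fun i _ => mul_pow _ _ _
  rw [this]
  have h2 : (∏ i, (t ^ ω i) ^ α i) = t ^ (∑ i, (α i : ℤ) * ω i) := by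
    have : ∀ i : Fin n, (t ^ ω i) ^ α i = t ^ ((α i : ℤ) * ω i) := by
      intro i
      rw [← zpow_natCast (t ^ ω i), ← zpow_mul, mul_comm]
    rw [Finset.prod_congr rfl fun i _ => this i, prod_zpow_sum' t ht]
  rw [h2, mul_assoc]

/-- The support of a nonzero polynomial `f` lies in a hyperplane `⟨α, ω⟩ = h`
if and only if the zero set of `f` is invariant under the torus action
`xᵢ ↦ t^{ωᵢ} xᵢ` for all nonzero `t`. -/
theorem support_in_hyperplane_iff_zero_set_invariant
    (n : ℕ) (hn : 1 ≤ n) (f : MvPolynomial (Fin n) ℂ) (hf : f ≠ 0)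
    (ω : Fin n → ℤ) :
    (∃ h : ℤ, ∀ α ∈ f.support, ∑ i, (α i : ℤ) * ω i = h) ↔
      (∀ t : ℂ, t ≠ 0 →
        {a : Fin n → ℂ |
            MvPolynomial.eval a
              ((MvPolynomial.aeval fun i =>
                MvPolynomial.C (t ^ ω i) * MvPolynomial.X i) f) = 0} =
          {a : Fin n → ℂ | MvPolynomial.eval a f = 0}) := by
  set w : (Fin n →₀ ℕ) → ℤ := fun α => ∑ i, (α i : ℤ) * ω i with hwdef
  constructor
  · rintro ⟨h, hh⟩ t ht
    ext a
    simp only [Set.mem_setOf_eq]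
    rw [eval_torus n f t ht ω a]
    have : ∑ α ∈ f.support, coeff α f * t ^ (∑ i, (α i : ℤ) * ω i) * ∏ i, a i ^ α i
        = t ^ h * eval a f := by
      rw [eval_eq', Finset.mul_sum]
      refine Finset.sum_congr rfl fun α hα => ?_
      rw [hh α hα]; ring
    rw [this, mul_eq_zero, or_iff_right (zpow_ne_zero h ht)]
  · intro H
    obtain ⟨α₀, hα₀⟩ := (support_nonempty.mpr hf)
    refine ⟨w α₀, ?_⟩
    by_contra hc
    push_neg at hc
    obtain ⟨β, hβ, hβne⟩ := hc
    set K := f.support.image w with hK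
    have hKne : K.Nonempty := ⟨w α₀, Finset.mem_image_of_mem _ hα₀⟩
    obtain ⟨m, hm⟩ : ∃ m, m = K.min' hKne := ⟨_, rfl⟩
    obtain ⟨M, hM⟩ : ∃ M, M = K.max' hKne := ⟨_, rfl⟩
    have hαK : ∀ α ∈ f.support, w α ∈ K := fun α hα => Finset.mem_image_of_mem _ hα
    have hmle : ∀ α ∈ f.support, m ≤ w α := fun α hα => hm ▸ K.min'_le _ (hαK α hα)
    have hMle : ∀ α ∈ f.support, w α ≤ M := fun α hα => hM ▸ K.le_max' _ (hαK α hα)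
    have hmM : m < M := by
      have hmM' : m ≤ M := hm ▸ hM ▸ K.min'_le _ (K.max'_mem hKne)
      rcases lt_or_eq_of_le hmM' with h | h
      · exact h
      · exfalso
        have e1 : w β = m := le_antisymm ((hMle β hβ).trans (le_of_eq h.symm)) (hmle β hβ)
        have e2 : w α₀ = m := le_antisymm ((hMle α₀ hα₀).trans (le_of_eq h.symm)) (hmle α₀ hα₀)
        exact hβne (e1.trans e2.symm)
    obtain ⟨αm, hαm, hαmw⟩ := Finset.mem_image.mp (hm ▸ K.min'_mem hKne : m ∈ K)
    obtain ⟨αM, hαM, hαMw⟩ := Finset.mem_image.mp (hM ▸ K.max'_mem hKne : M ∈ K)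
    -- the components of f at the minimal and maximal weight
    set fm : MvPolynomial (Fin n) ℂ :=
      ∑ α ∈ f.support.filter (fun α => w α = m), monomial α (coeff α f) with hfm
    set fM : MvPolynomial (Fin n) ℂ :=
      ∑ α ∈ f.support.filter (fun α => w α = M), monomial α (coeff α f) with hfM
    have coeff_comp : ∀ (k : ℤ) (γ : Fin n →₀ ℕ),
        coeff γ (∑ α ∈ f.support.filter (fun α => w α = k), monomial α (coeff α f))
          = if γ ∈ f.support.filter (fun α => w α = k) then coeff γ f else 0 := by
      intro k γ
      rw [coeff_sum]
      rw [Finset.sum_congr rfl (fun α _ => coeff_monomial γ α (coeff α f))]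
      exact Finset.sum_ite_eq' _ _ _
    have hfm0 : fm ≠ 0 := by
      intro h0
      have := coeff_comp m αm
      rw [← hfm, h0, if_pos (Finset.mem_filter.mpr ⟨hαm, hαmw⟩)] at this
      exact (mem_support_iff.mp hαm) (by simpa using this.symm)
    have hfM0 : fM ≠ 0 := by
      intro h0
      have := coeff_comp M αM
      rw [← hfM, h0, if_pos (Finset.mem_filter.mpr ⟨hαM, hαMw⟩)] at this
      exact (mem_support_iff.mp hαM) (by simpa using this.symm)
    -- find a point where f, fm, fM are all nonzero
    have hP : f * fm * fM ≠ 0 := mul_ne_zero (mul_ne_zero hf hfm0) hfM0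
    have hex : ∃ a : Fin n → ℂ, eval a (f * fm * fM) ≠ 0 := by
      by_contra hcon
      push_neg at hcon
      exact hP (MvPolynomial.funext fun x => by simpa using hcon x)
    obtain ⟨a, ha⟩ := hex
    rw [map_mul, map_mul] at ha
    have haf : eval a f ≠ 0 := fun h0 => ha (by rw [h0]; ring)
    have ham : eval a fm ≠ 0 := fun h0 => ha (by rw [h0]; ring)
    have haM : eval a fM ≠ 0 := fun h0 => ha (by rw [h0]; ring)
    -- evaluation of the components as sums
    have eval_comp : ∀ k : ℤ,
        eval a (∑ α ∈ f.support.filter (fun α => w α = k), monomial α (coeff α f))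
          = ∑ α ∈ f.support.filter (fun α => w α = k),
              coeff α f * ∏ i, a i ^ α i := by
      intro k
      rw [map_sum]
      refine Finset.sum_congr rfl fun α _ => ?_
      rw [eval_monomial, Finsupp.prod_pow]
    -- the univariate polynomial
    set q : Polynomial ℂ :=
      ∑ α ∈ f.support,
        Polynomial.C (coeff α f * ∏ i, a i ^ α i) * Polynomial.X ^ (w α - m).toNat with hq
    have hqcoeff : ∀ k : ℕ, q.coeff k
        = ∑ α ∈ f.support, if (w α - m).toNat = k then coeff α f * ∏ i, a i ^ α i else 0 := by
      intro k
      rw [hq, Polynomial.finset_sum_coeff]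
      refine Finset.sum_congr rfl fun α _ => ?_
      rw [Polynomial.coeff_C_mul_X_pow]
      exact if_congr (by omega) rfl rfl
    have hq0 : q.coeff 0 = eval a fm := by
      rw [hqcoeff 0, hfm, eval_comp m, Finset.sum_filter]
      refine Finset.sum_congr rfl fun α hα => ?_
      refine if_congr ?_ rfl rfl
      have := hmle α hα
      omega
    have hqd : q.coeff (M - m).toNat = eval a fM := by
      rw [hqcoeff _, hfM, eval_comp M, Finset.sum_filter]
      refine Finset.sum_congr rfl fun α hα => ?_
      refine if_congr ?_ rfl rfl
      have h1 := hmle α hα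
      have h2 := hMle α hα
      omega
    -- q has a nonzero root
    have hdegpos : 0 < q.degree := by
      have hle : ((M - m).toNat : WithBot ℕ) ≤ q.degree :=
        Polynomial.le_degree_of_ne_zero (by rw [hqd]; exact haM)
      refine lt_of_lt_of_le ?_ hle
      exact_mod_cast Nat.pos_of_ne_zero (by omega)
    obtain ⟨t₀, ht₀root⟩ := Complex.exists_root hdegpos
    have ht₀ : t₀ ≠ 0 := by
      intro h0
      apply ham
      rw [← hq0, Polynomial.coeff_zero_eq_eval_zero]
      subst h0
      exact ht₀root
    -- evaluate f at the torus-scaled point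
    have hkey : eval a ((aeval fun i => C (t₀ ^ ω i) * X i) f) = 0 := by
      rw [eval_torus n f t₀ ht₀ ω a]
      have : ∑ α ∈ f.support, coeff α f * t₀ ^ (∑ i, (α i : ℤ) * ω i) * ∏ i, a i ^ α i
          = t₀ ^ m * Polynomial.eval t₀ q := by
        rw [hq, Polynomial.eval_finset_sum, Finset.mul_sum]
        refine Finset.sum_congr rfl fun α hα => ?_
        rw [Polynomial.eval_mul, Polynomial.eval_C, Polynomial.eval_pow, Polynomial.eval_X]
        have h1 : (t₀ : ℂ) ^ (w α - m).toNat = t₀ ^ (w α - m) := by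
          rw [← zpow_natCast, Int.toNat_of_nonneg (by have := hmle α hα; omega)]
        have h2 : t₀ ^ m * t₀ ^ (w α - m) = t₀ ^ w α := by
          rw [← zpow_add₀ ht₀]; ring_nf
        rw [h1, ← h2]
        ring
      have hroot : Polynomial.eval t₀ q = 0 := ht₀root
      rw [this, hroot, mul_zero]
    have hmem : a ∈ {a : Fin n → ℂ |
        eval a ((aeval fun i => C (t₀ ^ ω i) * X i) f) = 0} := hkey
    rw [H t₀ ht₀] at hmem
    exact haf hmem
end

section
/- Let k ∈ ℕ and let d₁,…,d_k ∈ ℂ with dᵢ ≠ 1 for every i. Then the set of γ ∈ ℂ for which there exists a real number t with 0 < t ≤ 1 such that either t + (1−t)γ = 0, or t/(t + (1−t)γ) = dᵢ for some i ∈ {1,…,k}, has Lebesgue measure zero in ℂ. -/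
open MeasureTheory

private lemma span_singleton_ne_top_complex (c : ℂ) : Submodule.span ℝ {c} ≠ ⊤ := by
  intro h
  have h1 : Module.rank ℝ (Submodule.span ℝ ({c} : Set ℂ)) ≤ 1 := by
    simpa using rank_span_le (R := ℝ) ({c} : Set ℂ)
  rw [h] at h1
  have h2 : Module.rank ℝ (⊤ : Submodule ℝ ℂ) = 2 := by
    rw [rank_top]; exact Complex.rank_real_complex
  rw [h2] at h1
  norm_num at h1

/-- The set of bad ratios `γ` in the γ-trick has Lebesgue measure zero in `ℂ`:
for `d₁,…,d_k ≠ 1`, the set of `γ ∈ ℂ` for which some `t ∈ (0,1]` makes the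
denominator `t + (1-t)γ` vanish, or makes `t/(t+(1-t)γ)` hit some `dᵢ`,
is a null set. -/
theorem gamma_trick_bad_set_measure_zero
    (k : ℕ) (d : Fin k → ℂ) (hd : ∀ i, d i ≠ 1) :
    MeasureTheory.volume
        {γ : ℂ | ∃ t : ℝ, 0 < t ∧ t ≤ 1 ∧
          (((t : ℂ) + (1 - (t : ℂ)) * γ = 0) ∨
            ∃ i : Fin k, (t : ℂ) / ((t : ℂ) + (1 - (t : ℂ)) * γ) = d i)} = 0 := by
  refine measure_mono_null (t := (Submodule.span ℝ ({(1:ℂ)} : Set ℂ) : Set ℂ) ∪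
      ⋃ i : Fin k, (Submodule.span ℝ ({(1 - d i) / d i} : Set ℂ) : Set ℂ)) ?_ ?_
  · rintro γ ⟨t, ht0, ht1, h⟩
    have hden : ∀ _ : ((t : ℂ) + (1 - (t : ℂ)) * γ = 0),
        γ ∈ (Submodule.span ℝ ({(1:ℂ)} : Set ℂ) : Set ℂ) := by
      intro h0
      have ht1' : t < 1 := by
        rcases lt_or_eq_of_le ht1 with h' | h'
        · exact h'
        · exfalso; subst h'; norm_num at h0
      have h1t : (1 : ℂ) - (t : ℂ) ≠ 0 := by
        intro hc
        have : (1 : ℝ) - t = 0 := by exact_mod_cast hc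
        linarith
      have hγ : γ = ((-t / (1 - t) : ℝ) : ℂ) := by
        push_cast
        field_simp at h0 ⊢
        linear_combination h0
      refine Submodule.mem_span_singleton.2 ⟨-t / (1 - t), ?_⟩
      rw [Complex.real_smul, mul_one, hγ]
    rcases h with h0 | ⟨i, hi⟩
    · exact Or.inl (hden h0)
    · by_cases h0 : (t : ℂ) + (1 - (t : ℂ)) * γ = 0
      · exact Or.inl (hden h0)
      · right
        refine Set.mem_iUnion.2 ⟨i, ?_⟩
        have hdne : d i ≠ 0 := by
          intro hc
          rw [hc, div_eq_zero_iff] at hi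
          rcases hi with hi | hi
          · exact (ne_of_gt ht0) (by exact_mod_cast hi)
          · exact h0 hi
        have heq : (t : ℂ) = d i * ((t : ℂ) + (1 - (t : ℂ)) * γ) := by
          rw [div_eq_iff h0] at hi
          linear_combination hi
        have ht1' : t < 1 := by
          rcases lt_or_eq_of_le ht1 with h' | h'
          · exact h'
          · exfalso; apply hd i; subst h'
            push_cast at heq
            linear_combination -heq
        have h1t : (1 : ℂ) - (t : ℂ) ≠ 0 := by
          intro hc
          have : (1 : ℝ) - t = 0 := by exact_mod_cast hc
          linarith
        refine Submodule.mem_span_singleton.2 ⟨t / (1 - t), ?_⟩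
        rw [Complex.real_smul]
        push_cast
        field_simp
        linear_combination heq
  · apply measure_union_null
    · exact Measure.addHaar_submodule _ _ (span_singleton_ne_top_complex 1)
    · exact measure_iUnion_null fun i =>
        Measure.addHaar_submodule _ _ (span_singleton_ne_top_complex _)
end

section
/- Let n ≥ 1, let A be an n×n matrix with integer entries and det A ≠ 0, and let b₁,…,bₙ be nonzero complex numbers. Then the set of solutions x = (x₁,…,xₙ) with all xⱼ nonzero of the binomial system ∏_{j=1}^{n} xⱼ^{A_{j,i}} = bᵢ (for i = 1,…,n) is finite, and its cardinality equals |det A|. -/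
open Polynomial in
private lemma bsc_base_count (m : ℕ) (hm : m ≠ 0) (a : ℂ) (ha : a ≠ 0) :
    {w : ℂ | w ^ m = a}.Finite ∧ Nat.card {w : ℂ | w ^ m = a} = m := by
  have hζ := Complex.isPrimitiveRoot_exp m hm
  have hset : {w : ℂ | w ^ m = a} = ↑(nthRoots m a).toFinset := by
    ext w
    simp [Polynomial.mem_nthRoots (Nat.pos_of_ne_zero hm)]
  have hex : ∃ α : ℂ, α ^ m = a := by
    refine ⟨Complex.exp (Complex.log a / m), ?_⟩
    rw [← Complex.exp_nat_mul]
    rw [mul_div_cancel₀ _ (by exact_mod_cast hm : (m:ℂ) ≠ 0)]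
    exact Complex.exp_log ha
  have hcard : (nthRoots m a).toFinset.card = m := by
    rw [Multiset.toFinset_card_of_nodup (hζ.nthRoots_nodup ha), hζ.card_nthRoots a, if_pos hex]
  constructor
  · rw [hset]; exact Finset.finite_toSet _
  · rw [hset, Nat.card_coe_set_eq, Set.ncard_coe_finset, hcard]

private lemma bsc_units_equiv_complex (d : ℤ) (hd : d ≠ 0) (c : ℂˣ) :
    Nonempty ({z : ℂˣ | z ^ d = c} ≃ {w : ℂ | w ^ d = (c : ℂ)}) := by
  refine ⟨Equiv.ofBijective (fun z => ⟨(z : ℂˣ) , ?_⟩) ⟨?_, ?_⟩⟩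
  · obtain ⟨z, hz⟩ := z
    show (z : ℂ) ^ d = (c : ℂ)
    rw [← Units.val_zpow_eq_zpow_val, hz]
  · rintro ⟨z, hz⟩ ⟨z', hz'⟩ h
    simpa [Subtype.ext_iff, Units.ext_iff] using h
  · rintro ⟨w, hw⟩
    have hw0 : w ≠ 0 := by
      rintro rfl
      have h0 : (0:ℂ) ^ d = (c:ℂ) := hw
      rw [zero_zpow d hd] at h0
      exact c.ne_zero h0.symm
    refine ⟨⟨Units.mk0 w hw0, ?_⟩, rfl⟩
    show Units.mk0 w hw0 ^ d = c
    ext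
    rw [Units.val_zpow_eq_zpow_val]
    exact hw

private lemma bsc_unit_root_count (d : ℤ) (hd : d ≠ 0) (c : ℂˣ) :
    {z : ℂˣ | z ^ d = c}.Finite ∧ Nat.card {z : ℂˣ | z ^ d = c} = d.natAbs := by
  obtain ⟨e⟩ := bsc_units_equiv_complex d hd c
  have key : {w : ℂ | w ^ d = (c : ℂ)}.Finite ∧
      Nat.card {w : ℂ | w ^ d = (c : ℂ)} = d.natAbs := by
    obtain ⟨m, rfl | rfl⟩ := d.eq_nat_or_neg
    · have hm : m ≠ 0 := by simpa using hd
      have hss : {w : ℂ | w ^ (m : ℤ) = (c : ℂ)} = {w : ℂ | w ^ m = (c : ℂ)} := by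
        ext w; simp [zpow_natCast]
      rw [hss]
      simpa using bsc_base_count m hm c c.ne_zero
    · have hm : m ≠ 0 := by simpa using hd
      have hss : {w : ℂ | w ^ (-(m : ℤ)) = (c : ℂ)} = {w : ℂ | w ^ m = ((c⁻¹ : ℂˣ) : ℂ)} := by
        ext w
        simp only [Set.mem_setOf_eq, zpow_neg, zpow_natCast]
        rw [inv_eq_iff_eq_inv]
        simp
      rw [hss]
      simpa using bsc_base_count m hm _ (c⁻¹).ne_zero
  constructor
  · have := key.1.to_subtype
    rw [← Set.finite_coe_iff]
    exact Finite.of_equiv _ e.symm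
  · rw [Nat.card_congr e, key.2]

private lemma bsc_zpow_finset_sum {ι : Type*} (g : ℂˣ) (s : Finset ι) (c : ι → ℤ) :
    g ^ (∑ k ∈ s, c k) = ∏ k ∈ s, g ^ c k := by
  induction s using Finset.cons_induction with
  | empty => simp
  | cons a s ha ih => rw [Finset.sum_cons, Finset.prod_cons, zpow_add, ih]

private def bscTpow {n : ℕ} (x : Fin n → ℂˣ) (B : Matrix (Fin n) (Fin n) ℤ) : Fin n → ℂˣ :=
  fun i => ∏ j, x j ^ B j i

private lemma bscTpow_mul {n : ℕ} (x : Fin n → ℂˣ) (B C : Matrix (Fin n) (Fin n) ℤ) :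
    bscTpow x (B * C) = bscTpow (bscTpow x B) C := by
  funext i
  unfold bscTpow
  calc ∏ j, x j ^ (B * C) j i
      = ∏ j, ∏ k, (x j ^ B j k) ^ C k i := by
        refine Finset.prod_congr rfl fun j _ => ?_
        rw [Matrix.mul_apply, bsc_zpow_finset_sum]
        exact Finset.prod_congr rfl fun k _ => zpow_mul _ _ _
    _ = ∏ k, (∏ j, x j ^ B j k) ^ C k i := by
        rw [Finset.prod_comm]
        exact Finset.prod_congr rfl fun k _ => (Finset.prod_zpow _ _ _)
    _ = _ := rfl

private lemma bscTpow_one {n : ℕ} (x : Fin n → ℂˣ) : bscTpow x 1 = x := by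
  funext i
  unfold bscTpow
  rw [Finset.prod_eq_single i (fun j _ hj => by simp [Matrix.one_apply, hj]) (by simp)]
  simp [Matrix.one_apply]

private lemma bscTpow_diagonal {n : ℕ} (x : Fin n → ℂˣ) (d : Fin n → ℤ) (i : Fin n) :
    bscTpow x (Matrix.diagonal d) i = x i ^ d i := by
  unfold bscTpow
  rw [Finset.prod_eq_single i (fun j _ hj => by simp [Matrix.diagonal_apply_ne _ hj]) (by simp)]
  simp

open Matrix in
private lemma bsc_exists_snf (n : ℕ) (A : Matrix (Fin n) (Fin n) ℤ) (hA : A.det ≠ 0) :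
    ∃ (U V : Matrix (Fin n) (Fin n) ℤ) (d : Fin n → ℤ),
      IsUnit U.det ∧ IsUnit V.det ∧ A = U * Matrix.diagonal d * V := by
  classical
  have h_inj : Function.Injective A.mulVecLin := by
    intro x y h
    have h2 : A.adjugate *ᵥ (A *ᵥ x) = A.adjugate *ᵥ (A *ᵥ y) := by
      simpa [Matrix.mulVecLin] using congrArg (fun v => A.adjugate *ᵥ v) h
    rw [Matrix.mulVec_mulVec, Matrix.mulVec_mulVec, Matrix.adjugate_mul,
      Matrix.smul_mulVec, Matrix.smul_mulVec, Matrix.one_mulVec,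
      Matrix.one_mulVec] at h2
    exact smul_right_injective _ hA h2
  set N := LinearMap.range A.mulVecLin with hN
  set std := Pi.basisFun ℤ (Fin n) with hstd
  obtain ⟨m, snf⟩ := N.smithNormalForm std
  obtain ⟨bM, bN, f, a, hsnf⟩ := snf
  let eC := LinearEquiv.ofInjective A.mulVecLin h_inj
  have hm : m = n := by
    have e := (bN.map eC.symm).indexEquiv std
    simpa using Fintype.card_congr e
  subst hm
  let σ := Equiv.ofBijective f (Finite.injective_iff_bijective.mp f.injective)
  let P := LinearMap.toMatrix bM std (LinearMap.id)
  let P' := LinearMap.toMatrix std bM (LinearMap.id)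
  let Q := LinearMap.toMatrix std bN eC.toLinearMap
  let Q' := LinearMap.toMatrix bN std eC.symm.toLinearMap
  let S := LinearMap.toMatrix bN bM N.subtype
  have hPP' : P * P' = 1 := by
    rw [show P * P' = LinearMap.toMatrix std std (LinearMap.id.comp LinearMap.id) from
      (LinearMap.toMatrix_comp std bM std _ _).symm]
    rw [LinearMap.id_comp, LinearMap.toMatrix_id]
  have hQ'Q : Q' * Q = 1 := by
    rw [show Q' * Q = LinearMap.toMatrix std std
        (eC.symm.toLinearMap.comp eC.toLinearMap) from
      (LinearMap.toMatrix_comp std bN std _ _).symm]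
    have h3 : eC.symm.toLinearMap.comp eC.toLinearMap = LinearMap.id := by
      ext x
      simp
    rw [h3, LinearMap.toMatrix_id]
  have hfact : A = P * S * Q := by
    have h0 : A.mulVecLin = N.subtype ∘ₗ eC.toLinearMap := by
      ext x
      rfl
    have h1 : A = LinearMap.toMatrix std std A.mulVecLin := by
      rw [hstd, LinearMap.toMatrix_eq_toMatrix', ← Matrix.toLin'_apply' A,
        LinearMap.toMatrix'_toLin']
    rw [h1, h0, LinearMap.toMatrix_comp std bN std]
    have h2 : LinearMap.toMatrix bN std N.subtype = P * S := by
      rw [show P * S = LinearMap.toMatrix bN std (LinearMap.id.comp N.subtype) from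
        (LinearMap.toMatrix_comp bN bM std _ _).symm]
      rw [LinearMap.id_comp]
    rw [h2]
  let Pσ := Equiv.Perm.permMatrix ℤ σ.symm
  have hS : S = Pσ * Matrix.diagonal a := by
    ext j i
    rw [Matrix.mul_diagonal]
    have h4 : S j i = bM.repr ((bN i : _)) j := LinearMap.toMatrix_apply _ _ _ _ _
    rw [h4, hsnf i]
    simp only [_root_.map_smul, Module.Basis.repr_self, Finsupp.smul_single, smul_eq_mul, mul_one,
      Finsupp.single_apply]
    have hσ : σ i = f i := rfl
    simp only [Pσ, Equiv.Perm.permMatrix, PEquiv.toMatrix_apply, Equiv.toPEquiv_apply,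
      Option.mem_def, Option.some.injEq]
    by_cases h : f i = j
    · simp [← h, ← hσ, Equiv.symm_apply_apply]
    · have h5 : ¬ σ.symm j = i := fun hc => h (by rw [← hσ, ← hc, Equiv.apply_symm_apply])
      simp [h, h5]
  refine ⟨P * Pσ, Q, a, ?_, ?_, ?_⟩
  · rw [Matrix.det_mul]
    refine IsUnit.mul ?_ ?_
    · exact IsUnit.of_mul_eq_one _ (by rw [← Matrix.det_mul, hPP', Matrix.det_one])
    · rw [Matrix.det_permutation]
      exact (Int.isUnit_iff.mpr
        (by rcases Int.units_eq_one_or (Equiv.Perm.sign σ.symm) with h | h <;> simp [h]))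
  · exact IsUnit.of_mul_eq_one _
      (by rw [mul_comm, ← Matrix.det_mul, hQ'Q, Matrix.det_one])
  · rw [hfact, hS]
    simp only [Matrix.mul_assoc]

private lemma bsc_count_units (n : ℕ) (A : Matrix (Fin n) (Fin n) ℤ) (hA : A.det ≠ 0)
    (β : Fin n → ℂˣ) :
    {x : Fin n → ℂˣ | bscTpow x A = β}.Finite ∧
      Nat.card {x : Fin n → ℂˣ | bscTpow x A = β} = A.det.natAbs := by
  classical
  obtain ⟨U, V, d, hU, hV, hfact⟩ := bsc_exists_snf n A hA
  have hdet : A.det = U.det * (∏ i, d i) * V.det := by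
    rw [hfact, Matrix.det_mul, Matrix.det_mul, Matrix.det_diagonal]
  have hprod_ne : (∏ i, d i) ≠ 0 := by
    intro h0
    apply hA
    rw [hdet, h0, mul_zero, zero_mul]
  have hd : ∀ i, d i ≠ 0 := fun i hi =>
    hprod_ne (Finset.prod_eq_zero (Finset.mem_univ i) hi)
  have hunit_natAbs : ∀ z : ℤ, IsUnit z → z.natAbs = 1 := by
    intro z hz
    rcases Int.isUnit_iff.mp hz with h | h <;> simp [h]
  have hnatAbs : A.det.natAbs = ∏ i, (d i).natAbs := by
    rw [hdet, Int.natAbs_mul, Int.natAbs_mul, hunit_natAbs _ hU, hunit_natAbs _ hV,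
      one_mul, mul_one]
    exact map_prod Int.natAbsHom d Finset.univ
  -- inverses
  have hUdet := hU
  have hUU' : U * U⁻¹ = 1 := Matrix.mul_nonsing_inv U hU
  have hU'U : U⁻¹ * U = 1 := Matrix.nonsing_inv_mul U hU
  have hVV' : V * V⁻¹ = 1 := Matrix.mul_nonsing_inv V hV
  have hV'V : V⁻¹ * V = 1 := Matrix.nonsing_inv_mul V hV
  set c : Fin n → ℂˣ := bscTpow β V⁻¹ with hc
  set F : Set (Fin n → ℂˣ) := {y | bscTpow y (Matrix.diagonal d) = c} with hF
  -- bijection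
  have hg_li : Function.LeftInverse (fun y => bscTpow y U⁻¹) (fun x => bscTpow x U) := by
    intro x
    simp only
    rw [← bscTpow_mul, hUU', bscTpow_one]
  have hg_ri : Function.RightInverse (fun y => bscTpow y U⁻¹) (fun x => bscTpow x U) := by
    intro y
    simp only
    rw [← bscTpow_mul, hU'U, bscTpow_one]
  have hgbij : Function.Bijective (fun x => bscTpow x U) :=
    ⟨hg_li.injective, hg_ri.surjective⟩
  have hEF : {x : Fin n → ℂˣ | bscTpow x A = β} = (fun x => bscTpow x U) ⁻¹' F := by
    ext x
    simp only [Set.mem_setOf_eq, Set.mem_preimage, hF, Set.mem_setOf_eq]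
    have hAV : A * V⁻¹ = U * Matrix.diagonal d := by
      rw [hfact, Matrix.mul_assoc (U * Matrix.diagonal d) V V⁻¹, hVV', Matrix.mul_one]
    constructor
    · intro h
      rw [hc, ← h, ← bscTpow_mul, ← bscTpow_mul, hAV]
    · intro h
      rw [hfact, bscTpow_mul, bscTpow_mul, h, hc, ← bscTpow_mul, hV'V, bscTpow_one]
  -- F as a pi set
  have hFpi : F = Set.pi Set.univ (fun i => {z : ℂˣ | z ^ d i = c i}) := by
    ext y
    simp only [hF, Set.mem_setOf_eq, Set.mem_univ_pi, funext_iff]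
    exact forall_congr' fun i => by rw [bscTpow_diagonal]
  have hFfin : F.Finite := by
    rw [hFpi]
    exact Set.Finite.pi (fun i => (bsc_unit_root_count (d i) (hd i) (c i)).1)
  have hFcard : Nat.card F = ∏ i, (d i).natAbs := by
    rw [hFpi, Nat.card_congr (Equiv.Set.univPi _), Nat.card_pi]
    exact Finset.prod_congr rfl fun i _ => (bsc_unit_root_count (d i) (hd i) (c i)).2
  have e : {x : Fin n → ℂˣ | bscTpow x A = β} ≃ F :=
    (Equiv.ofBijective _ hgbij).subtypeEquiv (fun x => by
      constructor
      · intro hx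
        have := hEF ▸ hx
        exact this
      · intro hx
        rw [hEF]
        exact hx)
  constructor
  · rw [← Set.finite_coe_iff]
    have := hFfin.to_subtype
    exact Finite.of_equiv _ e.symm
  · rw [Nat.card_congr e, hFcard, hnatAbs]

/-- A binomial system `∏_j x_j^{A_{j,i}} = b_i` with integer exponent matrix `A` of
nonzero determinant and nonzero right-hand sides has exactly `|det A|` solutions in
the algebraic torus `(ℂˣ)ⁿ`. -/
theorem binomial_system_solution_count
    (n : ℕ) (hn : 1 ≤ n) (A : Matrix (Fin n) (Fin n) ℤ) (hA : A.det ≠ 0)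
    (b : Fin n → ℂ) (hb : ∀ i, b i ≠ 0) :
    {x : Fin n → ℂ | (∀ j, x j ≠ 0) ∧ ∀ i, ∏ j, x j ^ A j i = b i}.Finite ∧
    {x : Fin n → ℂ | (∀ j, x j ≠ 0) ∧ ∀ i, ∏ j, x j ^ A j i = b i}.ncard =
      A.det.natAbs := by
  classical
  set β : Fin n → ℂˣ := fun i => Units.mk0 (b i) (hb i) with hβ
  set E := {x : Fin n → ℂˣ | bscTpow x A = β} with hE
  set Sc := {x : Fin n → ℂ | (∀ j, x j ≠ 0) ∧ ∀ i, ∏ j, x j ^ A j i = b i} with hSc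
  have key := bsc_count_units n A hA β
  -- equivalence between Sc and E
  have hmem : ∀ x : Fin n → ℂˣ, x ∈ E ↔ (fun j => (x j : ℂ)) ∈ Sc := by
    intro x
    simp only [hE, hSc, Set.mem_setOf_eq, funext_iff]
    constructor
    · intro h
      refine ⟨fun j => (x j).ne_zero, fun i => ?_⟩
      have hi := h i
      have : ((bscTpow x A i : ℂˣ) : ℂ) = ((β i : ℂˣ) : ℂ) := by rw [hi]
      rw [hβ] at this
      simp only [Units.val_mk0] at this
      rw [← this]
      unfold bscTpow
      push_cast [Units.val_zpow_eq_zpow_val]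
      rfl
    · rintro ⟨h1, h2⟩ i
      ext
      unfold bscTpow
      rw [hβ]
      simp only [Units.val_mk0]
      rw [← h2 i]
      push_cast [Units.val_zpow_eq_zpow_val]
      rfl
  have hbij : Function.Bijective (fun x : E => (⟨fun j => (x.1 j : ℂ), (hmem x.1).mp x.2⟩ : Sc)) := by
    constructor
    · rintro ⟨x, hx⟩ ⟨y, hy⟩ h
      simp only [Subtype.ext_iff, funext_iff] at h ⊢
      intro j
      exact Units.ext (h j)
    · rintro ⟨y, hy⟩
      refine ⟨⟨fun j => Units.mk0 (y j) (hy.1 j), ?_⟩, ?_⟩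
      · rw [hmem]
        convert hy <;> simp
      · ext j
        simp
  have e : E ≃ Sc := Equiv.ofBijective _ hbij
  constructor
  · rw [← Set.finite_coe_iff]
    have := key.1.to_subtype
    exact Finite.of_equiv _ e
  · rw [← Nat.card_coe_set_eq, ← Nat.card_congr e, key.2]
end

section
/- Fix n ≥ 1 and a nonzero polynomial f = Σ_{α∈A} c_α x^α ∈ ℂ[x₁,…,xₙ] with support A ⊆ ℕⁿ and total degree d. Fix ω ∈ ℝⁿ, set h = max_{α∈A} ⟨α,ω⟩ and A_ω = {α ∈ A : ⟨α,ω⟩ = h}, assume A_ω ≠ A, and set d_ω = h − max_{α ∈ A∖A_ω} ⟨α,ω⟩. Fix a, b ∈ ℂⁿ with all aᵢ, bᵢ nonzero and set ρᵢ = bᵢ/aᵢ. Suppose the univariate polynomial s ↦ f_ω(a₁s−b₁,…,aₙs−bₙ), where f_ω = Σ_{α∈A_ω} c_α x^α, factors as K·∏_{i=1}^{n}(aᵢs−bᵢ)^{mᵢ}·∏_{j=1}^{n'}(s−τⱼ)^{kⱼ} with K ∈ ℂ nonzero, Σᵢ mᵢ + Σⱼ kⱼ ≤ d, and the n+n' numbers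 ρ₁,…,ρₙ,τ₁,…,τ_{n'} pairwise distinct. Define C = max_{α∈A} |c_α|/|K|, a_min = min({1} ∪ {|aᵢ| : 1≤i≤n}), a_max = max({1} ∪ {|aᵢ| : 1≤i≤n}), and for z ∈ {ρ₁,…,ρₙ,τ₁,…,τ_{n'}} define γ_z = min({a_min} ∪ {|z−ẑ|/2 : ẑ ∈ {ρ₁,…,ρₙ,τ₁,…,τ_{n'}}, ẑ ≠ z}) and Γ_z = max({2/a_max} ∪ {|z−ρᵢ| : 1≤i≤n}). Let z be one of these n+n' points, and let β = mᵢ if z = ρᵢ and β = kⱼ if z = τⱼ. Then for every real t ≥ 1 and every s ∈ ℂ satisfying f(t^{ω₁}(a₁s−b₁), …, t^{ωₙ}(aₙs−bₙ)) = 0 and |s−z| ≤ γ_z, one has |s−z|^β ≤ t^{−d_ω} · C · #(A∖A_ω) · ((a_max/a_min)·(1 + Γ_z/γ_z))^d. -/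
/-- Convergence rate of the HS-algorithm (Theorem on convergence rates): with the
notation of the paper, any point `s` on a path of the homotopy at time `t ≥ 1`
which lies within `γ_z` of a limit point `z` satisfies
`|s-z|^β ≤ t^{-d_ω} · C · #(A \ A_ω) · ((a_max/a_min)(1 + Γ_z/γ_z))^d`. -/
theorem hs_algorithm_convergence_rate
    (n : ℕ) (hn : 1 ≤ n)
    (f : MvPolynomial (Fin n) ℂ) (hf : f ≠ 0)
    (d : ℕ) (hd : d = f.totalDegree)
    (ω : Fin n → ℝ)
    (h : ℝ)
    (hh : IsGreatest
      ((fun α : Fin n →₀ ℕ => ∑ i, (α i : ℝ) * ω i) ''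
        (f.support : Set (Fin n →₀ ℕ))) h)
    (Aω : Finset (Fin n →₀ ℕ))
    (hAω : ∀ α : Fin n →₀ ℕ,
      α ∈ Aω ↔ α ∈ f.support ∧ ∑ i, (α i : ℝ) * ω i = h)
    (hAne : Aω ≠ f.support)
    (dω : ℝ)
    (hdω : IsGreatest
      ((fun α : Fin n →₀ ℕ => ∑ i, (α i : ℝ) * ω i) ''
        ((f.support \ Aω : Finset (Fin n →₀ ℕ)) : Set (Fin n →₀ ℕ))) (h - dω))
    (a b : Fin n → ℂ) (ha : ∀ i, a i ≠ 0) (hb : ∀ i, b i ≠ 0)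
    (ρ : Fin n → ℂ) (hρ : ∀ i, ρ i = b i / a i)
    (fω : MvPolynomial (Fin n) ℂ)
    (hfω1 : ∀ α ∈ Aω, MvPolynomial.coeff α fω = MvPolynomial.coeff α f)
    (hfω2 : ∀ α ∉ Aω, MvPolynomial.coeff α fω = 0)
    (K : ℂ) (hK : K ≠ 0)
    (n' : ℕ) (τ : Fin n' → ℂ) (m : Fin n → ℕ) (k : Fin n' → ℕ)
    (hfact :
      (MvPolynomial.aeval fun i =>
          Polynomial.C (a i) * Polynomial.X - Polynomial.C (b i)) fω =
        Polynomial.C K *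
            (∏ i, (Polynomial.C (a i) * Polynomial.X - Polynomial.C (b i)) ^ m i) *
          ∏ j, (Polynomial.X - Polynomial.C (τ j)) ^ k j)
    (hdeg : (∑ i, m i) + (∑ j, k j) ≤ d)
    (hdist : Function.Injective (Sum.elim ρ τ : Fin n ⊕ Fin n' → ℂ))
    (Cc : ℝ)
    (hCc : IsGreatest
      ((fun α : Fin n →₀ ℕ =>
          ‖MvPolynomial.coeff α f‖ / ‖K‖) ''
        (f.support : Set (Fin n →₀ ℕ))) Cc)
    (amin amax : ℝ)
    (hamin : IsLeast ({1} ∪ Set.range fun i => ‖a i‖) amin)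
    (hamax : IsGreatest ({1} ∪ Set.range fun i => ‖a i‖) amax)
    (z : ℂ) (hz : z ∈ Set.range ρ ∪ Set.range τ)
    (γz Γz : ℝ)
    (hγz : IsLeast
      ({amin} ∪ {r : ℝ | ∃ w ∈ (Set.range ρ ∪ Set.range τ) \ {z},
        r = ‖z - w‖ / 2}) γz)
    (hΓz : IsGreatest
      ({2 / amax} ∪ {r : ℝ | ∃ i, r = ‖z - ρ i‖}) Γz)
    (β : ℕ)
    (hβ : (∃ i, z = ρ i ∧ β = m i) ∨ (∃ j, z = τ j ∧ β = k j)) :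
    ∀ t : ℝ, 1 ≤ t → ∀ s : ℂ,
      MvPolynomial.eval (fun i => ((t ^ ω i : ℝ) : ℂ) * (a i * s - b i)) f = 0 →
      ‖s - z‖ ≤ γz →
      ‖s - z‖ ^ β ≤
        t ^ (-dω) * Cc * ((f.support \ Aω).card : ℝ) *
          ((amax / amin) * (1 + Γz / γz)) ^ d := by
  intro t ht s hs0 hsz
  have ht0 : (0:ℝ) < t := lt_of_lt_of_le one_pos ht
  -- positivity facts
  have hKpos : 0 < ‖K‖ := by simpa using hK
  have hamin_pos : 0 < amin := by
    rcases hamin.1 with h1 | ⟨i, hi⟩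
    · simp only [Set.mem_singleton_iff] at h1; rw [h1]; exact one_pos
    · rw [← hi]; exact (norm_pos_iff.mpr (ha i))
  have hamin_le_one : amin ≤ 1 := hamin.2 (Or.inl rfl)
  have hamax_ge_one : (1:ℝ) ≤ amax := hamax.2 (Or.inl rfl)
  have hamax_pos : 0 < amax := lt_of_lt_of_le one_pos hamax_ge_one
  have hγz_pos : 0 < γz := by
    rcases hγz.1 with h1 | ⟨w, hw, hwe⟩
    · simp only [Set.mem_singleton_iff] at h1; rw [h1]; exact hamin_pos
    · rw [hwe]
      have hzw : z - w ≠ 0 := sub_ne_zero.mpr (fun hzz => hw.2 (by simp [hzz.symm]))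
      exact div_pos (norm_pos_iff.mpr hzw) two_pos
  have hγz_le : γz ≤ amin := hγz.2 (Or.inl rfl)
  have hγz_le_one : γz ≤ 1 := hγz_le.trans hamin_le_one
  have hΓz_pos : 0 < Γz := lt_of_lt_of_le (div_pos two_pos hamax_pos) (hΓz.2 (Or.inl rfl))
  have hamin_le : ∀ i, amin ≤ ‖a i‖ := fun i => hamin.2 (Or.inr ⟨i, rfl⟩)
  have hamax_ge : ∀ i, ‖a i‖ ≤ amax := fun i => hamax.2 (Or.inr ⟨i, rfl⟩)
  have hΓz_ge : ∀ i, ‖z - ρ i‖ ≤ Γz := fun i => hΓz.2 (Or.inr ⟨i, rfl⟩)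
  set B : ℝ := amax * (γz + Γz) with hBdef
  have hB_ge_two : (2:ℝ) ≤ B := by
    have h2 : 2 / amax ≤ Γz := hΓz.2 (Or.inl rfl)
    have h3 : amax * (2 / amax) ≤ amax * (γz + Γz) :=
      mul_le_mul_of_nonneg_left (by linarith) hamax_pos.le
    calc (2:ℝ) = amax * (2 / amax) := by field_simp
      _ ≤ B := h3
  have hB_one : (1:ℝ) ≤ B := by linarith
  have hB_pos : (0:ℝ) < B := by linarith
  -- distance lower bounds
  have hlb : ∀ w ∈ Set.range ρ ∪ Set.range τ, w ≠ z → γz ≤ ‖s - w‖ := by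
    intro w hw hne
    have h1 : γz ≤ ‖z - w‖ / 2 :=
      hγz.2 (Or.inr ⟨w, ⟨hw, by simpa using hne⟩, rfl⟩)
    have h2 : ‖z - w‖ ≤ ‖z - s‖ + ‖s - w‖ :=
      norm_sub_le_norm_sub_add_norm_sub _ _ _
    have h3 : ‖z - s‖ = ‖s - z‖ := norm_sub_rev _ _
    linarith
  -- factor rewrite
  have hfacρ : ∀ i, a i * s - b i = a i * (s - ρ i) := by
    intro i; rw [hρ i, mul_sub, mul_div_cancel₀ _ (ha i)]
  have hfac_ub : ∀ i, ‖s - ρ i‖ ≤ γz + Γz := by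
    intro i
    have h2 : ‖s - ρ i‖ ≤ ‖s - z‖ + ‖z - ρ i‖ :=
      norm_sub_le_norm_sub_add_norm_sub _ _ _
    have := hΓz_ge i
    linarith
  have hub : ∀ i, ‖a i * s - b i‖ ≤ B := by
    intro i
    rw [hfacρ i, norm_mul]
    exact mul_le_mul (hamax_ge i) (hfac_ub i) (norm_nonneg _) hamax_pos.le
  -- Degree bound
  have hdegα : ∀ α ∈ f.support, ∑ i, α i ≤ d := by
    intro α hα
    have h1 := MvPolynomial.le_totalDegree hα
    rw [hd]
    rwa [Finsupp.sum_fintype _ _ (fun _ => rfl)] at h1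
  -- rpow product
  have hprodR : ∀ α : Fin n →₀ ℕ, ∏ i, (t ^ ω i) ^ (α i) = t ^ (∑ i, (α i:ℝ) * ω i) := by
    intro α
    rw [Real.rpow_sum_of_pos ht0]
    refine Finset.prod_congr rfl fun i _ => ?_
    rw [← Real.rpow_natCast (t ^ ω i) (α i), ← Real.rpow_mul ht0.le, mul_comm]
  set g : Fin n → ℂ := fun i => a i * s - b i with hg
  set F : Fin n → ℂ := fun i => ((t ^ ω i : ℝ) : ℂ) * (a i * s - b i) with hF
  have hprodC : ∀ α : Fin n →₀ ℕ,
      ∏ i, F i ^ (α i) = ((t ^ (∑ i, (α i:ℝ) * ω i) : ℝ) : ℂ) * ∏ i, g i ^ α i := by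
    intro α
    rw [← hprodR α]
    push_cast
    rw [← Finset.prod_mul_distrib]
    exact Finset.prod_congr rfl fun i _ => (mul_pow _ _ _)
  have hsub' : Aω ⊆ f.support := fun α hα => ((hAω α).mp hα).1
  have hsuppfω : fω.support ⊆ Aω := by
    intro α hα
    by_contra hc
    exact (MvPolynomial.mem_support_iff.mp hα) (hfω2 α hc)
  -- the key identity
  have hEfω : ∑ α ∈ Aω, MvPolynomial.coeff α fω * ∏ i, g i ^ α i
      = MvPolynomial.eval g fω := by
    rw [MvPolynomial.eval_eq']
    exact (Finset.sum_subset hsuppfω (fun x _ hnx => by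
      rw [MvPolynomial.notMem_support_iff.mp hnx, zero_mul])).symm
  have hsumAω : ∑ α ∈ Aω, MvPolynomial.coeff α f * ∏ i, F i ^ α i
      = ((t ^ h : ℝ) : ℂ) * MvPolynomial.eval g fω := by
    rw [← hEfω, Finset.mul_sum]
    refine Finset.sum_congr rfl fun α hα => ?_
    rw [hprodC α, ((hAω α).mp hα).2, hfω1 α hα]
    ring
  have h0 : ∑ α ∈ f.support, MvPolynomial.coeff α f * ∏ i, F i ^ α i = 0 := by
    rw [← MvPolynomial.eval_eq']; exact hs0
  have key1 : ((t ^ h : ℝ) : ℂ) * MvPolynomial.eval g fω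
      = - ∑ α ∈ f.support \ Aω, MvPolynomial.coeff α f * ∏ i, F i ^ α i := by
    have hsd := Finset.sum_sdiff (f := fun α => MvPolynomial.coeff α f * ∏ i, F i ^ α i) hsub'
    rw [hsumAω] at hsd
    rw [← hsd] at h0
    linear_combination h0
  -- evaluate the factorization
  have key2 : MvPolynomial.eval g fω
      = K * (∏ i, (a i * s - b i) ^ m i) * ∏ j, (s - τ j) ^ k j := by
    have h1 := congrArg (Polynomial.aeval s : Polynomial ℂ →ₐ[ℂ] ℂ) hfact
    rw [MvPolynomial.comp_aeval_apply] at h1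
    simp only [map_mul, map_sub, map_prod, map_pow, Polynomial.aeval_C, Polynomial.aeval_X,
      Algebra.algebraMap_self, RingHom.id_apply] at h1
    rw [show (MvPolynomial.eval g fω) = (MvPolynomial.aeval fun i => a i * s - b i) fω from
      (RingHom.congr_fun (MvPolynomial.coe_aeval_eq_eval (fun i => a i * s - b i)) fω).symm]
    rw [h1]
  set Pz : ℝ := (∏ i, ‖a i * s - b i‖ ^ m i) * ∏ j, ‖s - τ j‖ ^ k j
    with hPzdef
  have habsE : ‖MvPolynomial.eval g fω‖ = ‖K‖ * Pz := by
    rw [key2]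
    simp only [norm_mul, norm_prod, norm_pow]
    rw [hPzdef]; ring
  -- nonnegativity of Cc
  have hCc_nonneg : 0 ≤ Cc := by
    obtain ⟨α, hα, hv⟩ := hCc.1
    rw [← hv]; exact div_nonneg (norm_nonneg _) (norm_nonneg _)
  -- upper bound each rest term
  have hCcK : ∀ α ∈ f.support, ‖MvPolynomial.coeff α f‖ ≤ Cc * ‖K‖ := by
    intro α hα
    have h1 : ‖MvPolynomial.coeff α f‖ / ‖K‖ ≤ Cc := hCc.2 ⟨α, hα, rfl⟩
    calc ‖MvPolynomial.coeff α f‖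
        = ‖MvPolynomial.coeff α f‖ / ‖K‖ * ‖K‖ := by
          field_simp
      _ ≤ Cc * ‖K‖ := mul_le_mul_of_nonneg_right h1 hKpos.le
  have hterm : ∀ α ∈ f.support \ Aω,
      ‖MvPolynomial.coeff α f * ∏ i, F i ^ α i‖
        ≤ (Cc * ‖K‖) * (t ^ (h - dω) * B ^ d) := by
    intro α hα
    have hαs : α ∈ f.support := (Finset.mem_sdiff.mp hα).1
    rw [norm_mul]
    have h1 : ‖∏ i, F i ^ α i‖
        = t ^ (∑ i, (α i:ℝ) * ω i) * ∏ i, ‖g i‖ ^ α i := by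
      rw [hprodC α, norm_mul, norm_prod]
      simp only [norm_pow]
      rw [Complex.norm_real, Real.norm_eq_abs, abs_of_pos (Real.rpow_pos_of_pos ht0 _)]
    have h2 : ∏ i, ‖g i‖ ^ α i ≤ B ^ d := by
      calc ∏ i, ‖g i‖ ^ α i ≤ ∏ i, B ^ α i := by
            refine Finset.prod_le_prod
              (fun i _ => pow_nonneg (norm_nonneg _) _) (fun i _ => ?_)
            exact pow_le_pow_left₀ (norm_nonneg _) (hub i) _
        _ = B ^ (∑ i, α i) := Finset.prod_pow_eq_pow_sum _ _ _
        _ ≤ B ^ d := pow_le_pow_right₀ hB_one (hdegα α hαs)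
    have h3 : t ^ (∑ i, (α i:ℝ) * ω i) ≤ t ^ (h - dω) :=
      Real.rpow_le_rpow_of_exponent_le ht (hdω.2 ⟨α, by simpa using hα, rfl⟩)
    rw [h1]
    have ht1 : (0:ℝ) < t ^ (∑ i, (α i:ℝ) * ω i) := Real.rpow_pos_of_pos ht0 _
    have hPnn : (0:ℝ) ≤ ∏ i, ‖g i‖ ^ α i :=
      Finset.prod_nonneg fun i _ => pow_nonneg (norm_nonneg _) _
    exact mul_le_mul (hCcK α hαs)
      (mul_le_mul h3 h2 hPnn (Real.rpow_pos_of_pos ht0 _).le)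
      (mul_nonneg ht1.le hPnn) (mul_nonneg hCc_nonneg hKpos.le)
  have hcard_bound :
      t ^ h * (‖K‖ * Pz)
        ≤ ((f.support \ Aω).card : ℝ) * ((Cc * ‖K‖) * (t ^ (h - dω) * B ^ d)) := by
    have h1 : ‖((t ^ h : ℝ):ℂ) * MvPolynomial.eval g fω‖
        = t ^ h * (‖K‖ * Pz) := by
      rw [norm_mul, habsE, Complex.norm_real, Real.norm_eq_abs, abs_of_pos (Real.rpow_pos_of_pos ht0 _)]
    rw [← h1, key1, norm_neg]
    calc ‖∑ α ∈ f.support \ Aω, MvPolynomial.coeff α f * ∏ i, F i ^ α i‖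
        ≤ ∑ α ∈ f.support \ Aω, ‖MvPolynomial.coeff α f * ∏ i, F i ^ α i‖ :=
          norm_sum_le _ _
      _ ≤ ∑ _α ∈ f.support \ Aω, (Cc * ‖K‖) * (t ^ (h - dω) * B ^ d) :=
          Finset.sum_le_sum hterm
      _ = ((f.support \ Aω).card : ℝ) * ((Cc * ‖K‖) * (t ^ (h - dω) * B ^ d)) := by
          rw [Finset.sum_const, nsmul_eq_mul]
  have hPz_le : Pz ≤ ((f.support \ Aω).card : ℝ) * Cc * (t ^ (-dω) * B ^ d) := by
    have hth : (0:ℝ) < t ^ h := Real.rpow_pos_of_pos ht0 _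
    have hrw : t ^ (h - dω) = t ^ h * t ^ (-dω) := by
      rw [← Real.rpow_add ht0]; ring_nf
    have h2 : (t ^ h * ‖K‖) * Pz
        ≤ (t ^ h * ‖K‖) *
            (((f.support \ Aω).card : ℝ) * Cc * (t ^ (-dω) * B ^ d)) := by
      calc (t ^ h * ‖K‖) * Pz = t ^ h * (‖K‖ * Pz) := by ring
        _ ≤ ((f.support \ Aω).card : ℝ) * ((Cc * ‖K‖) * (t ^ (h - dω) * B ^ d)) :=
            hcard_bound
        _ = (t ^ h * ‖K‖) *
              (((f.support \ Aω).card : ℝ) * Cc * (t ^ (-dω) * B ^ d)) := by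
            rw [hrw]; ring
    exact le_of_mul_le_mul_left h2 (mul_pos (Real.rpow_pos_of_pos ht0 _) hKpos)
  have htneg : (0:ℝ) < t ^ (-dω) := Real.rpow_pos_of_pos ht0 _
  set Q : ℝ := (amax / amin) * (1 + Γz / γz) with hQdef
  have hQ_pos : 0 < Q := by
    rw [hQdef]
    exact mul_pos (div_pos hamax_pos hamin_pos)
      (add_pos one_pos (div_pos hΓz_pos hγz_pos))
  have hQB : Q * (amin * γz) = B := by
    have e1 : (amax / amin) * amin = amax := div_mul_cancel₀ _ hamin_pos.ne'
    have e2 : (1 + Γz / γz) * γz = γz + Γz := by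
      rw [add_mul, one_mul, div_mul_cancel₀ _ hγz_pos.ne']
    calc Q * (amin * γz) = ((amax / amin) * amin) * ((1 + Γz / γz) * γz) := by
          rw [hQdef]; ring
      _ = amax * (γz + Γz) := by rw [e1, e2]
      _ = B := hBdef.symm
  clear_value B Q
  have hBd : B ^ d = Q ^ d * (amin ^ d * γz ^ d) := by
    rw [← hQB]; ring
  -- final bound, by cases on where z is
  obtain ⟨i₀, hzρ, hβm⟩ | ⟨j₀, hzτ, hβk⟩ := hβ
  · -- case z = ρ i₀
    have hρne : ∀ i, i ≠ i₀ → ρ i ≠ z := by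
      intro i hi hcon
      have h1 : (Sum.elim ρ τ : Fin n ⊕ Fin n' → ℂ) (Sum.inl i)
          = (Sum.elim ρ τ : Fin n ⊕ Fin n' → ℂ) (Sum.inl i₀) := by
        simpa using hcon.trans hzρ
      have := hdist h1
      simp only [Sum.inl.injEq] at this
      exact hi this
    have hτne : ∀ j, τ j ≠ z := by
      intro j hcon
      have h1 : (Sum.elim ρ τ : Fin n ⊕ Fin n' → ℂ) (Sum.inr j)
          = (Sum.elim ρ τ : Fin n ⊕ Fin n' → ℂ) (Sum.inl i₀) := by
        simpa using hcon.trans hzρ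
      exact absurd (hdist h1) (by simp)
    have hlbρ' : ∀ i, i ≠ i₀ → amin * γz ≤ ‖a i‖ * ‖s - ρ i‖ :=
      fun i hi => mul_le_mul (hamin_le i) (hlb (ρ i) (Or.inl ⟨i, rfl⟩) (hρne i hi))
        hγz_pos.le (norm_nonneg _)
    have hlbτ' : ∀ j, amin * γz ≤ ‖s - τ j‖ := fun j =>
      (mul_le_of_le_one_left hγz_pos.le hamin_le_one).trans
        (hlb (τ j) (Or.inr ⟨j, rfl⟩) (hτne j))
    set M₁ : ℕ := (∑ i ∈ Finset.univ.erase i₀, m i) + ∑ j, k j with hM₁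
    have hsum_split : m i₀ + ∑ i ∈ Finset.univ.erase i₀, m i = ∑ i, m i :=
      Finset.add_sum_erase _ _ (Finset.mem_univ i₀)
    have hM₁d : M₁ + β ≤ d := by
      rw [hβm]; omega
    have hPz_lb : amin ^ (M₁ + β) * γz ^ M₁ * ‖s - z‖ ^ β ≤ Pz := by
      have e1 : ∏ i, ‖a i * s - b i‖ ^ m i
          = (‖a i₀‖ * ‖s - ρ i₀‖) ^ m i₀
            * ∏ i ∈ Finset.univ.erase i₀,
                (‖a i‖ * ‖s - ρ i‖) ^ m i := by
        simp_rw [hfacρ, norm_mul]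
        exact (Finset.mul_prod_erase _ _ (Finset.mem_univ i₀)).symm
      have l1 : (amin * ‖s - z‖) ^ m i₀
          ≤ (‖a i₀‖ * ‖s - ρ i₀‖) ^ m i₀ := by
        apply pow_le_pow_left₀ (mul_nonneg hamin_pos.le (norm_nonneg _))
        rw [← hzρ]
        exact mul_le_mul_of_nonneg_right (hamin_le i₀) (norm_nonneg _)
      have l2 : ∏ i ∈ Finset.univ.erase i₀, (amin * γz) ^ m i
          ≤ ∏ i ∈ Finset.univ.erase i₀,
              (‖a i‖ * ‖s - ρ i‖) ^ m i :=
        Finset.prod_le_prod (fun i _ => pow_nonneg (mul_nonneg hamin_pos.le hγz_pos.le) _)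
          (fun i hi => pow_le_pow_left₀ (mul_nonneg hamin_pos.le hγz_pos.le)
            (hlbρ' i (Finset.ne_of_mem_erase hi)) _)
      have l3 : ∏ j, (amin * γz) ^ k j ≤ ∏ j, ‖s - τ j‖ ^ k j :=
        Finset.prod_le_prod (fun j _ => pow_nonneg (mul_nonneg hamin_pos.le hγz_pos.le) _)
          (fun j _ => pow_le_pow_left₀ (mul_nonneg hamin_pos.le hγz_pos.le) (hlbτ' j) _)
      calc amin ^ (M₁ + β) * γz ^ M₁ * ‖s - z‖ ^ β
          = (amin * ‖s - z‖) ^ m i₀ *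
            ((∏ i ∈ Finset.univ.erase i₀, (amin * γz) ^ m i) *
              ∏ j, (amin * γz) ^ k j) := by
            rw [Finset.prod_pow_eq_pow_sum, Finset.prod_pow_eq_pow_sum, hM₁, hβm]
            ring
        _ ≤ (‖a i₀‖ * ‖s - ρ i₀‖) ^ m i₀ *
            ((∏ i ∈ Finset.univ.erase i₀,
                (‖a i‖ * ‖s - ρ i‖) ^ m i) *
              ∏ j, ‖s - τ j‖ ^ k j) :=
            mul_le_mul l1
              (mul_le_mul l2 l3
                (Finset.prod_nonneg fun _ _ =>
                  pow_nonneg (mul_nonneg hamin_pos.le hγz_pos.le) _)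
                (Finset.prod_nonneg fun _ _ =>
                  pow_nonneg (mul_nonneg (norm_nonneg _)
                    (norm_nonneg _)) _))
              (mul_nonneg
                (Finset.prod_nonneg fun _ _ =>
                  pow_nonneg (mul_nonneg hamin_pos.le hγz_pos.le) _)
                (Finset.prod_nonneg fun _ _ =>
                  pow_nonneg (mul_nonneg hamin_pos.le hγz_pos.le) _))
              (pow_nonneg (mul_nonneg (norm_nonneg _)
                (norm_nonneg _)) _)
        _ = Pz := by rw [hPzdef, e1]; ring
    have hmono1 : amin ^ d ≤ amin ^ (M₁ + β) :=
      pow_le_pow_of_le_one hamin_pos.le hamin_le_one hM₁d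
    have hmono2 : γz ^ d ≤ γz ^ M₁ :=
      pow_le_pow_of_le_one hγz_pos.le hγz_le_one (le_trans (Nat.le_add_right _ _) hM₁d)
    have main : ‖s - z‖ ^ β * (amin ^ (M₁ + β) * γz ^ M₁)
        ≤ (t ^ (-dω) * Cc * ((f.support \ Aω).card : ℝ) * Q ^ d) *
            (amin ^ (M₁ + β) * γz ^ M₁) := by
      calc ‖s - z‖ ^ β * (amin ^ (M₁ + β) * γz ^ M₁)
          = amin ^ (M₁ + β) * γz ^ M₁ * ‖s - z‖ ^ β := by ring
        _ ≤ Pz := hPz_lb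
        _ ≤ ((f.support \ Aω).card : ℝ) * Cc * (t ^ (-dω) * B ^ d) := hPz_le
        _ = (t ^ (-dω) * Cc * ((f.support \ Aω).card : ℝ) * Q ^ d) *
              (amin ^ d * γz ^ d) := by rw [hBd]; ring
        _ ≤ (t ^ (-dω) * Cc * ((f.support \ Aω).card : ℝ) * Q ^ d) *
              (amin ^ (M₁ + β) * γz ^ M₁) := by
            apply mul_le_mul_of_nonneg_left
              (mul_le_mul hmono1 hmono2 (pow_nonneg hγz_pos.le _)
                (pow_nonneg hamin_pos.le _))
              (mul_nonneg (mul_nonneg (mul_nonneg htneg.le hCc_nonneg)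
                (Nat.cast_nonneg _)) (pow_nonneg hQ_pos.le _))
    exact le_of_mul_le_mul_right main
      (mul_pos (pow_pos hamin_pos _) (pow_pos hγz_pos _))
  · -- case z = τ j₀
    have hρne : ∀ i, ρ i ≠ z := by
      intro i hcon
      have h1 : (Sum.elim ρ τ : Fin n ⊕ Fin n' → ℂ) (Sum.inl i)
          = (Sum.elim ρ τ : Fin n ⊕ Fin n' → ℂ) (Sum.inr j₀) := by
        simpa using hcon.trans hzτ
      exact absurd (hdist h1) (by simp)
    have hτne : ∀ j, j ≠ j₀ → τ j ≠ z := by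
      intro j hj hcon
      have h1 : (Sum.elim ρ τ : Fin n ⊕ Fin n' → ℂ) (Sum.inr j)
          = (Sum.elim ρ τ : Fin n ⊕ Fin n' → ℂ) (Sum.inr j₀) := by
        simpa using hcon.trans hzτ
      have := hdist h1
      simp only [Sum.inr.injEq] at this
      exact hj this
    have hlbρ' : ∀ i, amin * γz ≤ ‖a i‖ * ‖s - ρ i‖ :=
      fun i => mul_le_mul (hamin_le i) (hlb (ρ i) (Or.inl ⟨i, rfl⟩) (hρne i))
        hγz_pos.le (norm_nonneg _)
    have hlbτ' : ∀ j, j ≠ j₀ → amin * γz ≤ ‖s - τ j‖ := fun j hj =>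
      (mul_le_of_le_one_left hγz_pos.le hamin_le_one).trans
        (hlb (τ j) (Or.inr ⟨j, rfl⟩) (hτne j hj))
    set M₁ : ℕ := (∑ i, m i) + ∑ j ∈ Finset.univ.erase j₀, k j with hM₁
    have hsum_split : k j₀ + ∑ j ∈ Finset.univ.erase j₀, k j = ∑ j, k j :=
      Finset.add_sum_erase _ _ (Finset.mem_univ j₀)
    have hM₁d : M₁ + β ≤ d := by
      rw [hβk]; omega
    have hPz_lb : amin ^ (M₁ + β) * γz ^ M₁ * ‖s - z‖ ^ β ≤ Pz := by
      have e1 : ∏ j, ‖s - τ j‖ ^ k j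
          = ‖s - τ j₀‖ ^ k j₀
            * ∏ j ∈ Finset.univ.erase j₀, ‖s - τ j‖ ^ k j :=
        (Finset.mul_prod_erase _ _ (Finset.mem_univ j₀)).symm
      have e2 : ∏ i, ‖a i * s - b i‖ ^ m i
          = ∏ i, (‖a i‖ * ‖s - ρ i‖) ^ m i := by
        simp_rw [hfacρ, norm_mul]
      have l1 : (amin * ‖s - z‖) ^ k j₀ ≤ ‖s - τ j₀‖ ^ k j₀ := by
        apply pow_le_pow_left₀ (mul_nonneg hamin_pos.le (norm_nonneg _))
        rw [← hzτ]
        exact mul_le_of_le_one_left (norm_nonneg _) hamin_le_one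
      have l2 : ∏ i, (amin * γz) ^ m i
          ≤ ∏ i, (‖a i‖ * ‖s - ρ i‖) ^ m i :=
        Finset.prod_le_prod (fun i _ => pow_nonneg (mul_nonneg hamin_pos.le hγz_pos.le) _)
          (fun i _ => pow_le_pow_left₀ (mul_nonneg hamin_pos.le hγz_pos.le) (hlbρ' i) _)
      have l3 : ∏ j ∈ Finset.univ.erase j₀, (amin * γz) ^ k j
          ≤ ∏ j ∈ Finset.univ.erase j₀, ‖s - τ j‖ ^ k j :=
        Finset.prod_le_prod (fun j _ => pow_nonneg (mul_nonneg hamin_pos.le hγz_pos.le) _)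
          (fun j hj => pow_le_pow_left₀ (mul_nonneg hamin_pos.le hγz_pos.le)
            (hlbτ' j (Finset.ne_of_mem_erase hj)) _)
      calc amin ^ (M₁ + β) * γz ^ M₁ * ‖s - z‖ ^ β
          = (amin * ‖s - z‖) ^ k j₀ *
            ((∏ i, (amin * γz) ^ m i) *
              ∏ j ∈ Finset.univ.erase j₀, (amin * γz) ^ k j) := by
            rw [Finset.prod_pow_eq_pow_sum, Finset.prod_pow_eq_pow_sum, hM₁, hβk]
            ring
        _ ≤ ‖s - τ j₀‖ ^ k j₀ *
            ((∏ i, (‖a i‖ * ‖s - ρ i‖) ^ m i) *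
              ∏ j ∈ Finset.univ.erase j₀, ‖s - τ j‖ ^ k j) :=
            mul_le_mul l1
              (mul_le_mul l2 l3
                (Finset.prod_nonneg fun _ _ =>
                  pow_nonneg (mul_nonneg hamin_pos.le hγz_pos.le) _)
                (Finset.prod_nonneg fun _ _ =>
                  pow_nonneg (mul_nonneg (norm_nonneg _)
                    (norm_nonneg _)) _))
              (mul_nonneg
                (Finset.prod_nonneg fun _ _ =>
                  pow_nonneg (mul_nonneg hamin_pos.le hγz_pos.le) _)
                (Finset.prod_nonneg fun _ _ =>
                  pow_nonneg (mul_nonneg hamin_pos.le hγz_pos.le) _))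
              (pow_nonneg (norm_nonneg _) _)
        _ = Pz := by rw [hPzdef, e1, e2]; ring
    have hmono1 : amin ^ d ≤ amin ^ (M₁ + β) :=
      pow_le_pow_of_le_one hamin_pos.le hamin_le_one hM₁d
    have hmono2 : γz ^ d ≤ γz ^ M₁ :=
      pow_le_pow_of_le_one hγz_pos.le hγz_le_one (le_trans (Nat.le_add_right _ _) hM₁d)
    have main : ‖s - z‖ ^ β * (amin ^ (M₁ + β) * γz ^ M₁)
        ≤ (t ^ (-dω) * Cc * ((f.support \ Aω).card : ℝ) * Q ^ d) *
            (amin ^ (M₁ + β) * γz ^ M₁) := by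
      calc ‖s - z‖ ^ β * (amin ^ (M₁ + β) * γz ^ M₁)
          = amin ^ (M₁ + β) * γz ^ M₁ * ‖s - z‖ ^ β := by ring
        _ ≤ Pz := hPz_lb
        _ ≤ ((f.support \ Aω).card : ℝ) * Cc * (t ^ (-dω) * B ^ d) := hPz_le
        _ = (t ^ (-dω) * Cc * ((f.support \ Aω).card : ℝ) * Q ^ d) *
              (amin ^ d * γz ^ d) := by rw [hBd]; ring
        _ ≤ (t ^ (-dω) * Cc * ((f.support \ Aω).card : ℝ) * Q ^ d) *
              (amin ^ (M₁ + β) * γz ^ M₁) := by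
            apply mul_le_mul_of_nonneg_left
              (mul_le_mul hmono1 hmono2 (pow_nonneg hγz_pos.le _)
                (pow_nonneg hamin_pos.le _))
              (mul_nonneg (mul_nonneg (mul_nonneg htneg.le hCc_nonneg)
                (Nat.cast_nonneg _)) (pow_nonneg hQ_pos.le _))
    exact le_of_mul_le_mul_right main
      (mul_pos (pow_pos hamin_pos _) (pow_pos hγz_pos _))
end

section
/- For j ∈ ℕ let a_j = (2j)!/(j!·2^j), regarded as a real number. Then the sums Σ_{j=1}^{⌊(n−1)/2⌋} (a_j · a_{n−j}) / a_n tend to 0 as n → ∞. -/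
/-- With `a_j = (2j)!/(j!·2^j)` (the number of fixed-point-free involutions of a
`2j`-set, as a real number), the sums `Σ_{j=1}^{⌊(n-1)/2⌋} a_j·a_{n-j}/a_n`
tend to `0` as `n → ∞`. -/
theorem involution_count_ratio_sum_tendsto_zero
    (a : ℕ → ℝ)
    (ha : ∀ j : ℕ, a j = ((2 * j).factorial : ℝ) / ((j.factorial : ℝ) * 2 ^ j)) :
    Filter.Tendsto
      (fun n : ℕ => ∑ j ∈ Finset.Icc 1 ((n - 1) / 2), a j * a (n - j) / a n)
      Filter.atTop (nhds 0) := by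
  have hpos : ∀ j, 0 < a j := by
    intro j
    rw [ha]
    have h1 : (0:ℝ) < ((2*j).factorial : ℝ) := by positivity
    have h2 : (0:ℝ) < ((j.factorial : ℝ) * 2 ^ j) := by positivity
    exact div_pos h1 h2
  have hrec : ∀ j : ℕ, a (j+1) = (2*(j:ℝ)+1) * a j := by
    intro j
    rw [ha, ha]
    have h2 : 2*(j+1) = (2*j+1)+1 := by ring
    rw [h2, Nat.factorial_succ, Nat.factorial_succ, Nat.factorial_succ, pow_succ]
    have hf : ((j.factorial : ℝ)) ≠ 0 := by positivity
    have hp : ((2:ℝ) ^ j) ≠ 0 := by positivity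
    push_cast
    field_simp
    ring
  have ha1 : a 1 = 1 := by
    rw [ha]; norm_num [Nat.factorial]
  have ha2 : a 2 = 3 := by
    have h := hrec 1
    rw [ha1] at h
    norm_num at h
    exact h
  apply squeeze_zero' (g := fun n : ℕ => 2 / (n : ℝ))
  · filter_upwards with n
    apply Finset.sum_nonneg
    intro j _
    have := hpos j
    have := hpos (n - j)
    have := hpos n
    positivity
  · filter_upwards [Filter.eventually_ge_atTop 8] with n hn
    set M := (n - 1) / 2 with hM
    have hMn : M ≤ n := by omega
    have hnR : (8:ℝ) ≤ n := by exact_mod_cast hn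
    have h1pos : (0:ℝ) < 2*(n:ℝ) - 1 := by nlinarith
    have h3pos : (0:ℝ) < 2*(n:ℝ) - 3 := by nlinarith
    have hn0 : (0:ℝ) < n := by nlinarith
    -- antitone step
    have key : ∀ j, 2 ≤ j → j ≤ M → a j * a (n - j) / a n ≤ a 2 * a (n - 2) / a n := by
      intro j h2 hjM
      induction j, h2 using Nat.le_induction with
      | base => exact le_refl _
      | succ j hj ih =>
        have hjM' : j ≤ M := by omega
        have hstep : a (j+1) * a (n - (j+1)) / a n ≤ a j * a (n - j) / a n := by
          have hk : n - j = (n - (j+1)) + 1 := by omega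
          have hA : a (n - j) = (2*(((n - (j+1)) : ℕ):ℝ) + 1) * a (n - (j+1)) := by
            rw [hk, hrec]
          have hB : a (j+1) = (2*(j:ℝ)+1) * a j := hrec j
          have hratio : (2*(j:ℝ)+1) ≤ 2*(((n - (j+1)) : ℕ):ℝ) + 1 := by
            have : 2*j+1 ≤ 2*(n - (j+1)) + 1 := by omega
            exact_mod_cast this
          have hprod : a (j+1) * a (n - (j+1)) ≤ a j * a (n - j) := by
            rw [hA, hB]
            have h1 := (hpos j).le
            have h2 := (hpos (n - (j+1))).le
            nlinarith [mul_le_mul_of_nonneg_right hratio (mul_nonneg h1 h2)]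
          exact (div_le_div_iff_of_pos_right (hpos n)).mpr hprod
        exact le_trans hstep (ih hjM')
    -- values of t1 and t2
    have hc1 : (((n-1):ℕ):ℝ) = (n:ℝ) - 1 := by
      have h : (1:ℕ) ≤ n := by omega
      push_cast [h]; ring
    have hc2 : (((n-2):ℕ):ℝ) = (n:ℝ) - 2 := by
      have h : (2:ℕ) ≤ n := by omega
      push_cast [h]; ring
    have hA : a n = (2*(n:ℝ) - 1) * a (n - 1) := by
      have hk : n = (n - 1) + 1 := by omega
      have := hrec (n-1)
      rw [← hk, hc1] at this
      rw [this]; ring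
    have hB : a (n-1) = (2*(n:ℝ) - 3) * a (n - 2) := by
      have hk2 : n - 1 = (n - 2) + 1 := by omega
      have := hrec (n-2)
      rw [← hk2, hc2] at this
      rw [this]; ring
    have ht1 : a 1 * a (n - 1) / a n = 1 / (2*(n:ℝ) - 1) := by
      rw [ha1, hA, one_mul]
      rw [mul_comm (2*(n:ℝ) - 1) (a (n-1)), ← div_div,
        div_self (hpos (n-1)).ne']
    have ht2 : a 2 * a (n - 2) / a n = 3 / ((2*(n:ℝ) - 1) * (2*(n:ℝ) - 3)) := by
      rw [ha2, hA, hB]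
      have hne : a (n-2) ≠ 0 := (hpos _).ne'
      field_simp
    -- split the sum
    have hM1 : 1 ≤ M := by omega
    have hsplit : Finset.Icc 1 M = insert 1 (Finset.Icc 2 M) := by
      ext x
      simp only [Finset.mem_Icc, Finset.mem_insert]
      omega
    have hnotmem : 1 ∉ Finset.Icc 2 M := by simp
    rw [hsplit, Finset.sum_insert hnotmem]
    have ht2nonneg : 0 ≤ a 2 * a (n - 2) / a n := by
      have := hpos 2; have := hpos (n-2); have := hpos n; positivity
    have hsum2 : ∑ j ∈ Finset.Icc 2 M, a j * a (n - j) / a n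
        ≤ ((M - 1 : ℕ) : ℝ) * (a 2 * a (n - 2) / a n) := by
      have hcard : (Finset.Icc 2 M).card = M - 1 := by
        rw [Nat.card_Icc]; omega
      calc ∑ j ∈ Finset.Icc 2 M, a j * a (n - j) / a n
          ≤ ∑ j ∈ Finset.Icc 2 M, a 2 * a (n - 2) / a n := by
            apply Finset.sum_le_sum
            intro j hj
            simp only [Finset.mem_Icc] at hj
            exact key j hj.1 hj.2
        _ = ((M - 1 : ℕ) : ℝ) * (a 2 * a (n - 2) / a n) := by
            rw [Finset.sum_const, hcard, nsmul_eq_mul]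
    have hM1n : ((M - 1 : ℕ) : ℝ) ≤ (n : ℝ) := by
      exact_mod_cast (by omega : M - 1 ≤ n)
    have hbound : a 1 * a (n - 1) / a n + ∑ j ∈ Finset.Icc 2 M, a j * a (n - j) / a n
        ≤ 1 / (2*(n:ℝ) - 1) + (3*(n:ℝ)) / ((2*(n:ℝ) - 1) * (2*(n:ℝ) - 3)) := by
      have step2 : ∑ j ∈ Finset.Icc 2 M, a j * a (n - j) / a n
          ≤ (3*(n:ℝ)) / ((2*(n:ℝ) - 1) * (2*(n:ℝ) - 3)) := by
        calc ∑ j ∈ Finset.Icc 2 M, a j * a (n - j) / a n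
            ≤ ((M - 1 : ℕ) : ℝ) * (a 2 * a (n - 2) / a n) := hsum2
          _ ≤ (n:ℝ) * (a 2 * a (n - 2) / a n) :=
              mul_le_mul_of_nonneg_right hM1n ht2nonneg
          _ = (3*(n:ℝ)) / ((2*(n:ℝ) - 1) * (2*(n:ℝ) - 3)) := by
              rw [ht2]; ring
      have step1 : a 1 * a (n - 1) / a n = 1 / (2*(n:ℝ) - 1) := ht1
      linarith [step2, step1.le]
    refine hbound.trans ?_
    rw [div_add_div _ _ h1pos.ne' (by positivity : ((2*(n:ℝ)-1)*(2*(n:ℝ)-3)) ≠ 0),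
      div_le_div_iff₀ (by positivity) hn0]
    have hfact : (n:ℝ)*(5*(n:ℝ)-3) ≤ 2*(2*(n:ℝ)-1)*(2*(n:ℝ)-3) := by nlinarith
    nlinarith [mul_le_mul_of_nonneg_left hfact h1pos.le]
  · exact tendsto_const_div_atTop_nhds_zero_nat 2
end
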